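/- arXiv:0709.1627 — 2 statements merged into one kernel-verified Lean document; each statement's English description precedes it below -/
import Mathlib

section
/- Let a be the monomial ideal of R with exponent set A and J the monomial ideal with exponent set B, with a ⊆ √J. For every u ∈ σ^∨ \ Q(B) there exists e ≥ 1 such that λ_A(u) ≤ ν_a^J(p^e)/p^e. -/
open Finset Filter Pointwise

noncomputable section

namespace Paper

variable {d n : ℕ}

/-- The standard inner product pairing on `ℝ^d`. -/
def pair (u w : Fin d → ℝ) : ℝ := ∑ i, u i * w i

/-- The coercion `ℤ^d → ℝ^d`. -/
def toR (u : Fin d → ℤ) : Fin d → ℝ := fun i => (u i : ℝ)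

/-- The cone generated by the integer vectors `v 1, …, v n`. -/
def cone (v : Fin n → Fin d → ℤ) : Set (Fin d → ℝ) :=
  {x | ∃ c : Fin n → ℝ, (∀ j, 0 ≤ c j) ∧ x = ∑ j, c j • toR (v j)}

/-- The dual cone `σ^∨ = {u | ⟨u, x⟩ ≥ 0 for all x ∈ σ}`. -/
def dualCone (v : Fin n → Fin d → ℤ) : Set (Fin d → ℝ) :=
  {u | ∀ x ∈ cone v, 0 ≤ pair u x}

/-- Strong convexity of the cone generated by `v`. -/
def StronglyConvex (v : Fin n → Fin d → ℤ) : Prop :=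
  ∀ x ∈ cone v, -x ∈ cone v → x = 0

/-- An integer vector is primitive if the gcd of its coordinates is 1. -/
def IsPrimitive (w : Fin d → ℤ) : Prop := Finset.univ.gcd w = 1

/-- The cone generated by `v` is `d`-dimensional. -/
def FullDim (v : Fin n → Fin d → ℤ) : Prop :=
  Submodule.span ℝ (Set.range fun j => toR (v j)) = ⊤

/-- The Newton polyhedron `P(A) = conv(A) + σ^∨`. -/
def newton (v : Fin n → Fin d → ℤ) (A : Finset (Fin d → ℤ)) : Set (Fin d → ℝ) :=
  convexHull ℝ (toR '' ↑A) + dualCone v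

/-- The set `Q(A) = ⋃_{a ∈ A} (a + σ^∨)`. -/
def QSet (v : Fin n → Fin d → ℤ) (A : Finset (Fin d → ℤ)) : Set (Fin d → ℝ) :=
  ⋃ a ∈ A, (toR a +ᵥ dualCone v)

/-- `λ_A(u) = sup {λ > 0 | u ∈ λ·P(A)}` (and `0` if no such `λ` exists;
note `Real.sSup` of the empty set is `0`). -/
def lam (v : Fin n → Fin d → ℤ) (A : Finset (Fin d → ℤ)) (u : Fin d → ℝ) : ℝ :=
  sSup {l : ℝ | 0 < l ∧ u ∈ l • newton v A}

/-- `Q(m)` for the maximal monomial ideal, whose exponent set is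
`(σ^∨ ∩ ℤ^d) \ {0}`. -/
def Qm (v : Fin n → Fin d → ℤ) : Set (Fin d → ℝ) :=
  ⋃ a ∈ {a : Fin d → ℤ | toR a ∈ dualCone v ∧ a ≠ 0}, (toR a +ᵥ dualCone v)

/-- The set `O = {u ∈ σ^∨ | ⟨u, v_j⟩ ≥ 1 for some j}`. -/
def OSet (v : Fin n → Fin d → ℤ) : Set (Fin d → ℝ) :=
  {u ∈ dualCone v | ∃ j, 1 ≤ pair u (toR (v j))}

/-- The additive submonoid `σ^∨ ∩ ℤ^d` of `ℤ^d`. -/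
def latt (v : Fin n → Fin d → ℤ) : AddSubmonoid (Fin d → ℤ) where
  carrier := {u | toR u ∈ dualCone v}
  zero_mem' := by
    intro x hx
    simp [pair, toR]
  add_mem' := by
    intro a b ha hb x hx
    have h : pair (toR (a + b)) x = pair (toR a) x + pair (toR b) x := by
      simp [pair, toR, add_mul, Finset.sum_add_distrib]
    have h2 := add_nonneg (ha x hx) (hb x hx)
    rw [h]
    exact h2

/-- The toric ring `R = k[σ^∨ ∩ ℤ^d]`, as the monoid algebra of the
additive monoid `σ^∨ ∩ ℤ^d` over `k`. -/
abbrev Toric (k : Type) [Field k] (v : Fin n → Fin d → ℤ) : Type :=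
  AddMonoidAlgebra k (latt v)

/-- The monomial ideal of `R` with exponent set `A`: the ideal generated by
the monomials `X^a`, `a ∈ A`. -/
def monIdeal (k : Type) [Field k] (v : Fin n → Fin d → ℤ) (A : Finset (Fin d → ℤ)) :
    Ideal (Toric k v) :=
  Ideal.span {x | ∃ a : latt v, (a : Fin d → ℤ) ∈ A ∧ x = AddMonoidAlgebra.single a 1}

/-- The maximal monomial ideal of `R`, generated by all monomials `X^u`
with `u ∈ (σ^∨ ∩ ℤ^d) \ {0}`. -/
def maxMonIdeal (k : Type) [Field k] (v : Fin n → Fin d → ℤ) : Ideal (Toric k v) :=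
  Ideal.span {x | ∃ a : latt v, a ≠ 0 ∧ x = AddMonoidAlgebra.single a 1}

/-- The bracket power `J^{[q]}`: the ideal generated by the `q`-th powers of
elements of `J`. -/
def bracket {S : Type*} [CommRing S] (J : Ideal S) (q : ℕ) : Ideal S :=
  Ideal.span ((fun x => x ^ q) '' (J : Set S))

/-- `ν_a^J(q) = max {r ∈ ℕ | a^r ⊄ J^{[q]}}`. -/
def nuF {S : Type*} [CommRing S] (a J : Ideal S) (q : ℕ) : ℕ :=
  sSup {r : ℕ | ¬ a ^ r ≤ bracket J q}

/-!
The set `Q(B)` is closed, so `(1 + ε) • u ∉ Q(B)` for some `ε > 0`. Write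
`(1 + ε) • u = μ • (∑ w a • a + y)` with `∑ w a = 1`, `y ∈ σ^∨` and `μ > λ_A(u)`. For `q = p ^ e`
the lattice point `x = ∑ ⌊q μ w a⌋ • a` gives a monomial `X^x ∈ a^r` with `r ≥ q μ - |A|`, and
`q (1 + ε) u - x ∈ σ^∨`. Since `J^{[q]}` is generated by the monomials `X^{q b}`, `b ∈ B`,
`X^x ∈ J^{[q]}` would force `(1 + ε) • u ∈ Q(B)`. Hence `ν_a^J(q) ≥ q μ - |A| ≥ q λ_A(u)` once `q`
is large. The set defining `ν_a^J(q)` is bounded because `a ⊆ √(J^{[q]})` and `a` is finitely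
generated.
-/

open Topology

lemma pair_add_left (a b x : Fin d → ℝ) : pair (a + b) x = pair a x + pair b x := by
  simp only [pair, Pi.add_apply, add_mul, Finset.sum_add_distrib]

lemma pair_smul_left (c : ℝ) (a x : Fin d → ℝ) : pair (c • a) x = c * pair a x := by
  simp only [pair, Pi.smul_apply, smul_eq_mul, Finset.mul_sum, mul_assoc]

lemma toR_injective : Function.Injective (toR (d := d)) :=
  fun _ _ h => funext fun i => by simpa [toR] using congrFun h i

section DualCone

variable {v : Fin n → Fin d → ℤ}

lemma dualCone_add_mem {a b : Fin d → ℝ} (ha : a ∈ dualCone v) (hb : b ∈ dualCone v) :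
    a + b ∈ dualCone v := fun x hx => by
  rw [pair_add_left]
  exact add_nonneg (ha x hx) (hb x hx)

lemma dualCone_smul_mem {c : ℝ} (hc : 0 ≤ c) {a : Fin d → ℝ} (ha : a ∈ dualCone v) :
    c • a ∈ dualCone v := fun x hx => by
  rw [pair_smul_left]
  exact mul_nonneg hc (ha x hx)

lemma dualCone_sum_smul_mem {ι : Type*} {s : Finset ι} {c : ι → ℝ} {g : ι → Fin d → ℝ}
    (hc : ∀ i ∈ s, 0 ≤ c i) (hg : ∀ i ∈ s, g i ∈ dualCone v) :
    ∑ i ∈ s, c i • g i ∈ dualCone v :=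
  Finset.sum_induction _ (· ∈ dualCone v) (fun _ _ => dualCone_add_mem)
    (fun x _ => by simp [pair]) fun i hi => dualCone_smul_mem (hc i hi) (hg i hi)

lemma isClosed_dualCone : IsClosed (dualCone v) := by
  have : dualCone v = ⋂ x ∈ cone v, {u | 0 ≤ pair u x} := by ext; simp [dualCone]
  rw [this]
  exact isClosed_biInter fun x _ => isClosed_le continuous_const (by unfold pair; fun_prop)

lemma isClosed_QSet (B : Finset (Fin d → ℤ)) : IsClosed (QSet v B) :=
  isClosed_biUnion_finset fun b _ => isClosed_dualCone.vadd (toR b)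

lemma exists_one_add_smul_notMem_QSet {B : Finset (Fin d → ℤ)} {u : Fin d → ℝ}
    (hu : u ∉ QSet v B) : ∃ ε : ℝ, 0 < ε ∧ (1 + ε) • u ∉ QSet v B := by
  have hcont : Continuous fun ε : ℝ => (1 + ε) • u := by fun_prop
  have hopen : ∀ᶠ ε in 𝓝 (0 : ℝ), (1 + ε) • u ∈ (QSet v B)ᶜ :=
    hcont.continuousAt.eventually_mem
      ((isClosed_QSet B).isOpen_compl.mem_nhds (by simpa using hu))
  obtain ⟨ε, hε, hεpos⟩ := ((hopen.filter_mono nhdsWithin_le_nhds).and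
    (self_mem_nhdsWithin : Set.Ioi (0 : ℝ) ∈ 𝓝[>] 0)).exists
  exact ⟨ε, hεpos, hε⟩

end DualCone

section Newton

variable {v : Fin n → Fin d → ℤ} {A : Finset (Fin d → ℤ)}

lemma exists_weights_of_mem_newton {z : Fin d → ℝ} (hz : z ∈ newton v A) :
    ∃ w : (Fin d → ℤ) → ℝ, (∀ a ∈ A, 0 ≤ w a) ∧ ∑ a ∈ A, w a = 1 ∧
      ∃ y ∈ dualCone v, z = ∑ a ∈ A, w a • toR a + y := by
  classical
  obtain ⟨c, hc, y, hy, rfl⟩ := hz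
  rw [← Finset.coe_image, Finset.mem_convexHull'] at hc
  obtain ⟨w, hw0, hw1, rfl⟩ := hc
  have hinj : Set.InjOn toR (A : Set (Fin d → ℤ)) := toR_injective.injOn
  refine ⟨w ∘ toR, fun a ha => hw0 _ (mem_image_of_mem _ ha), ?_, y, hy, ?_⟩
  · rwa [Finset.sum_image hinj] at hw1
  · rw [Finset.sum_image hinj]
    rfl

lemma exists_nat_coeffs_sub_mem_dualCone (hA : ∀ a ∈ A, toR a ∈ dualCone v)
    {w : (Fin d → ℤ) → ℝ} (hw0 : ∀ a ∈ A, 0 ≤ w a) (hw1 : ∑ a ∈ A, w a = 1) {t : ℝ} (ht : 0 ≤ t) :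
    ∃ r : (Fin d → ℤ) → ℕ, t - A.card ≤ ∑ a ∈ A, (r a : ℝ) ∧
      t • ∑ a ∈ A, w a • toR a - ∑ a ∈ A, (r a : ℝ) • toR a ∈ dualCone v := by
  refine ⟨fun a => ⌊t * w a⌋₊, ?_, ?_⟩
  · calc t - A.card = ∑ a ∈ A, (t * w a - 1) := by
          rw [Finset.sum_sub_distrib, ← Finset.mul_sum, hw1]; simp
      _ ≤ ∑ a ∈ A, (⌊t * w a⌋₊ : ℝ) :=
          Finset.sum_le_sum fun a _ => by linarith [Nat.lt_floor_add_one (t * w a)]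
  · have : t • ∑ a ∈ A, w a • toR a - ∑ a ∈ A, (⌊t * w a⌋₊ : ℝ) • toR a
        = ∑ a ∈ A, (t * w a - ⌊t * w a⌋₊) • toR a := by
      simp only [Finset.smul_sum, smul_smul, sub_smul, Finset.sum_sub_distrib]
    rw [this]
    exact dualCone_sum_smul_mem
      (fun a ha => sub_nonneg.2 (Nat.floor_le (mul_nonneg ht (hw0 a ha)))) hA

end Newton

section Algebra

lemma single_sum_nsmul_mem_pow {k M ι : Type*} [CommSemiring k] [AddCommMonoid M]
    {I : Ideal (AddMonoidAlgebra k M)} {s : Finset ι} {g : ι → M}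
    (hg : ∀ i ∈ s, AddMonoidAlgebra.single (g i) (1 : k) ∈ I) (r : ι → ℕ) :
    AddMonoidAlgebra.single (∑ i ∈ s, r i • g i) (1 : k) ∈ I ^ ∑ i ∈ s, r i := by
  have : AddMonoidAlgebra.single (∑ i ∈ s, r i • g i) (1 : k)
      = ∏ i ∈ s, AddMonoidAlgebra.single (g i) (1 : k) ^ r i := by
    simp only [AddMonoidAlgebra.single_pow, one_pow, AddMonoidAlgebra.prod_single, prod_const_one]
  rw [this, ← Finset.prod_pow_eq_pow_sum]
  exact Ideal.prod_mem_prod fun i hi => Ideal.pow_mem_pow (hg i hi) _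

lemma bracket_span_eq {S : Type*} [CommRing S] (p : ℕ) [ExpChar S p] (G : Set S) (e : ℕ) :
    bracket (Ideal.span G) (p ^ e) = Ideal.span ((· ^ p ^ e) '' G) :=
  Ideal.map_span (iterateFrobenius S p e) G

lemma le_radical_bracket {S : Type*} [CommRing S] (J : Ideal S) (q : ℕ) :
    J ≤ (bracket J q).radical :=
  fun x hx => ⟨q, Ideal.subset_span ⟨x, hx, rfl⟩⟩

lemma le_nuF {S : Type*} [CommRing S] {a J : Ideal S} (ha : a.FG) (hrad : a ≤ J.radical)
    {q r : ℕ} (hr : ¬ a ^ r ≤ bracket J q) : r ≤ nuF a J q := by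
  have hrad' : a ≤ (bracket J q).radical := by
    simpa only [Ideal.radical_idem] using hrad.trans (Ideal.radical_mono (le_radical_bracket J q))
  obtain ⟨N, hN⟩ := Ideal.exists_pow_le_of_le_radical_of_fg hrad' ha
  refine le_csSup ⟨N, fun m hm => ?_⟩ hr
  by_contra! hNm
  exact hm ((Ideal.pow_le_pow_right hNm.le).trans hN)

end Algebra

section Toric

variable {k : Type} [Field k] {v : Fin n → Fin d → ℤ}

lemma monIdeal_eq_span_of' (A : Finset (Fin d → ℤ)) :
    monIdeal k v A =
      Ideal.span (AddMonoidAlgebra.of' k (latt v) '' {a | (a : Fin d → ℤ) ∈ A}) := by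
  simp only [monIdeal, AddMonoidAlgebra.of'_apply, Set.image, Set.mem_ofPred_eq, eq_comm]

lemma monIdeal_fg (A : Finset (Fin d → ℤ)) : (monIdeal k v A).FG := by
  rw [monIdeal_eq_span_of']
  exact Submodule.fg_span ((A.finite_toSet.preimage Subtype.coe_injective.injOn).image _)

lemma exists_single_mem_monIdeal_pow {A : Finset (Fin d → ℤ)}
    (hA : ∀ a ∈ A, toR a ∈ dualCone v) (r : (Fin d → ℤ) → ℕ) :
    ∃ x : latt v, toR (x : Fin d → ℤ) = ∑ a ∈ A, (r a : ℝ) • toR a ∧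
      AddMonoidAlgebra.single x (1 : k) ∈ monIdeal k v A ^ ∑ a ∈ A, r a := by
  let g : A → latt v := fun a => ⟨a, hA a a.2⟩
  refine ⟨∑ a : A, r a • g a, ?_, ?_⟩
  · ext i
    simp [g, toR, Finset.sum_apply, ← Finset.sum_coe_sort A]
  · rw [← Finset.sum_coe_sort A]
    exact single_sum_nsmul_mem_pow (fun a _ => by exact Ideal.subset_span ⟨g a, a.2, rfl⟩) _

lemma single_notMem_bracket_monIdeal (p : ℕ) [ExpChar k p] {B : Finset (Fin d → ℤ)}
    {u : Fin d → ℝ} (hu : u ∉ QSet v B) {x : latt v} (e : ℕ)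
    (hx : ((p ^ e : ℕ) : ℝ) • u - toR (x : Fin d → ℤ) ∈ dualCone v) :
    AddMonoidAlgebra.single x (1 : k) ∉ bracket (monIdeal k v B) (p ^ e) := by
  have : ExpChar (Toric k v) p := expChar_of_injective_algebraMap (algebraMap k _).injective p
  intro hmem
  have hpow : (fun b => AddMonoidAlgebra.of' k (latt v) b ^ p ^ e)
      = AddMonoidAlgebra.of' k (latt v) ∘ (p ^ e • ·) := by
    funext b
    simp [AddMonoidAlgebra.of'_apply]
  rw [monIdeal_eq_span_of', bracket_span_eq, Set.image_image, hpow, Set.image_comp] at hmem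
  obtain ⟨_, ⟨b, hb, rfl⟩, s, hs⟩ :=
    AddMonoidAlgebra.mem_ideal_span_of'_image.1 hmem x (by simp)
  have hq : (0 : ℝ) < (p ^ e : ℕ) := by exact_mod_cast expChar_pow_pos k p e
  have hxs : toR (x : Fin d → ℤ) = toR s + ((p ^ e : ℕ) : ℝ) • toR b := by
    ext i
    simp [hs, toR]
  have hub : ((p ^ e : ℕ) : ℝ) • (u - toR b) ∈ dualCone v := by
    rw [smul_sub, ← add_sub_cancel_left (toR (s : Fin d → ℤ)) (_ • toR _), ← hxs, ← sub_add]
    exact dualCone_add_mem hx s.2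
  refine hu (Set.mem_biUnion hb ⟨u - toR b, ?_, add_sub_cancel _ _⟩)
  have := dualCone_smul_mem (inv_nonneg.2 hq.le) hub
  rwa [smul_smul, inv_mul_cancel₀ hq.ne', one_smul] at this

end Toric

lemma sub_card_le_nuF {k : Type} [Field k] (p : ℕ) [ExpChar k p] {v : Fin n → Fin d → ℤ}
    {A B : Finset (Fin d → ℤ)} (hA : ∀ a ∈ A, toR a ∈ dualCone v)
    (hrad : monIdeal k v A ≤ (monIdeal k v B).radical) {u : Fin d → ℝ} (hu : u ∉ QSet v B)
    {μ : ℝ} (hμ : 0 ≤ μ) (huμ : u ∈ μ • newton v A) (e : ℕ) :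
    ((p ^ e : ℕ) : ℝ) * μ - A.card ≤ nuF (monIdeal k v A) (monIdeal k v B) (p ^ e) := by
  obtain ⟨z, hz, rfl⟩ := huμ
  obtain ⟨w, hw0, hw1, y, hy, rfl⟩ := exists_weights_of_mem_newton hz
  set q : ℝ := ((p ^ e : ℕ) : ℝ)
  have hq : 0 ≤ q := Nat.cast_nonneg _
  obtain ⟨r, hr, hrsub⟩ := exists_nat_coeffs_sub_mem_dualCone hA hw0 hw1 (mul_nonneg hq hμ)
  obtain ⟨x, hx, hxmem⟩ := exists_single_mem_monIdeal_pow (k := k) hA r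
  have hxq : q • μ • (∑ a ∈ A, w a • toR a + y) - toR (x : Fin d → ℤ) ∈ dualCone v := by
    have : q • μ • (∑ a ∈ A, w a • toR a + y) - toR (x : Fin d → ℤ)
        = ((q * μ) • ∑ a ∈ A, w a • toR a - ∑ a ∈ A, (r a : ℝ) • toR a) + (q * μ) • y := by
      rw [hx, smul_smul, smul_add]
      abel
    exact this ▸ dualCone_add_mem hrsub (dualCone_smul_mem (mul_nonneg hq hμ) hy)
  have hnot := single_notMem_bracket_monIdeal (k := k) p hu e hxq
  calc q * μ - A.card ≤ ∑ a ∈ A, (r a : ℝ) := hr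
    _ ≤ nuF (monIdeal k v A) (monIdeal k v B) (p ^ e) := by
      exact_mod_cast le_nuF (monIdeal_fg A) hrad fun h => hnot (h hxmem)

theorem lam_le_nu_general
    (d n p : ℕ) (hp : p.Prime)
    (k : Type) [Field k] [ExpChar k p]
    (v : Fin n → Fin d → ℤ)
    (A B : Finset (Fin d → ℤ))
    (hAl : ∀ a ∈ A, toR a ∈ dualCone v)
    (hrad : monIdeal k v A ≤ (monIdeal k v B).radical) :
    ∀ u ∈ dualCone v \ QSet v B,
      ∃ e : ℕ, 1 ≤ e ∧
        lam v A u ≤ (nuF (monIdeal k v A) (monIdeal k v B) (p ^ e) : ℝ) / (p ^ e : ℝ) := by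
  rintro u ⟨-, huQ⟩
  set lamu := lam v A u
  rcases le_or_gt lamu 0 with hlam | hlam
  · exact ⟨1, le_rfl, hlam.trans (by positivity)⟩
  obtain ⟨ε, hε, hεQ⟩ := exists_one_add_smul_notMem_QSet huQ
  obtain ⟨l, ⟨hl, hul⟩, hllam⟩ :
      ∃ l ∈ {l : ℝ | 0 < l ∧ u ∈ l • newton v A}, lamu / (1 + ε) < l := by
    by_contra! h
    exact (div_lt_self hlam (by linarith)).not_ge (Real.sSup_le h (by positivity))
  set μ := (1 + ε) * l
  have hlamμ : lamu < μ := by rwa [div_lt_iff₀ (by linarith), mul_comm] at hllam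
  have huμ : (1 + ε) • u ∈ μ • newton v A :=
    smul_smul (1 + ε) l (newton v A) ▸ Set.smul_mem_smul_set hul
  obtain ⟨e, he⟩ := pow_unbounded_of_one_lt ((A.card : ℝ) / (μ - lamu))
    (by exact_mod_cast hp.one_lt : (1 : ℝ) < p)
  refine ⟨e + 1, le_add_self, ?_⟩
  have hcore := sub_card_le_nuF p hAl hrad hεQ (mul_pos (by linarith) hl).le huμ (e + 1)
  push_cast at hcore
  have hq : (p : ℝ) ^ e ≤ (p : ℝ) ^ (e + 1) :=
    pow_le_pow_right₀ (by exact_mod_cast hp.one_le) e.le_succ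
  have hcard : (A.card : ℝ) ≤ (p : ℝ) ^ (e + 1) * (μ - lamu) := by
    rw [div_lt_iff₀ (by linarith)] at he
    nlinarith
  rw [le_div_iff₀ (by exact_mod_cast pow_pos hp.pos (e + 1))]
  linarith

/-- for every `u ∈ σ^∨ \ Q(B)` there exists `e ≥ 1` with
`λ_A(u) ≤ ν_a^J(p^e)/p^e`. -/
theorem lam_le_nu
    (d n p : ℕ) (hd : 1 ≤ d) (hp : p.Prime)
    (k : Type) [Field k] [CharP k p] [ExpChar k p] [PerfectRing k p]
    (v : Fin n → Fin d → ℤ)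
    (hsc : StronglyConvex v) (hprim : ∀ j, IsPrimitive (v j))
    (A B : Finset (Fin d → ℤ))
    (hAne : A.Nonempty) (hBne : B.Nonempty)
    (hAl : ∀ a ∈ A, toR a ∈ dualCone v) (hBl : ∀ b ∈ B, toR b ∈ dualCone v)
    (ha0 : monIdeal k v A ≠ ⊥) (haP : monIdeal k v A ≠ ⊤)
    (hJ0 : monIdeal k v B ≠ ⊥) (hJP : monIdeal k v B ≠ ⊤)
    (hrad : monIdeal k v A ≤ (monIdeal k v B).radical) :
    ∀ u ∈ dualCone v \ QSet v B,
      ∃ e : ℕ, 1 ≤ e ∧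
        lam v A u ≤ (nuF (monIdeal k v A) (monIdeal k v B) (p ^ e) : ℝ) / (p ^ e : ℝ) :=
  lam_le_nu_general d n p hp k v A B hAl hrad

end Paper
end
end

section
/- Assume σ is d-dimensional. Let A ⊆ σ^∨ ∩ ℤ^d be finite and nonempty, and for u ∈ σ^∨ ∩ ℤ^d define μ_A(u) := sup_{ω ∈ σ^∨ \ O} λ_A(u + ω). Then for every finite nonempty set B ⊆ σ^∨ ∩ ℤ^d, the infimum of μ_A(u) over all u ∈ B + (σ^∨ ∩ ℤ^d) (the exponents of all monomials of the monomial ideal generated by B) equals min_{b ∈ B} μ_A(b). -/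
/-!
`μ_A` is monotone along `σ^∨`: since `P(A) + σ^∨ = P(A)`, `u ∈ λ·P(A)` implies
`u + z ∈ λ·P(A)` for `z ∈ σ^∨`, so `λ_A(u + ω) ≤ λ_A(u + z + ω)` and `μ_A(u) ≤ μ_A(u + z)`.
Hence the infimum of `μ_A` over `B + σ^∨` is attained on `B`.

The suprema are real suprema, so unbounded sets have supremum `0`. If `0 ∈ P(A)`, then
`λ_A` vanishes on `σ^∨` and everything is `0`. Otherwise every `a ∈ A` pairs positively
with `v₁ + ⋯ + vₙ`, which gives `λ_A(x) ≤ ⟨x, v₁ + ⋯ + vₙ⟩ / m` for some `m > 0`, and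
`⟨ω, v₁ + ⋯ + vₙ⟩ ≤ n` for `ω ∈ σ^∨ \ O`.
-/

open Finset Filter Pointwise

noncomputable section

namespace Paper

variable {d n : ℕ}

/-- `μ_A(u) = sup_{ω ∈ σ^∨ \ O} λ_A(u + ω)` for a lattice point `u`. -/
def muA (v : Fin n → Fin d → ℤ) (A : Finset (Fin d → ℤ)) (u : Fin d → ℤ) : ℝ :=
  sSup (lam v A '' (toR u +ᵥ (dualCone v \ OSet v)))


section DualCone

variable {v : Fin n → Fin d → ℤ}

lemma pair_eq_dotProduct (u w : Fin d → ℝ) : pair u w = u ⬝ᵥ w := rfl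

lemma toR_add (u z : Fin d → ℤ) : toR (u + z) = toR u + toR z := by
  funext i; simp [toR]

lemma toR_zero : toR (0 : Fin d → ℤ) = 0 := by
  funext i; simp [toR]

lemma toR_mem_cone (j : Fin n) : toR (v j) ∈ cone v :=
  ⟨Pi.single j 1, fun k => by by_cases h : k = j <;> simp [h],
    by simp [Pi.single_apply, ite_smul]⟩

lemma zero_mem_dualCone : (0 : Fin d → ℝ) ∈ dualCone v :=
  fun x _ => by simp [pair_eq_dotProduct]

lemma add_mem_dualCone {x y : Fin d → ℝ} (hx : x ∈ dualCone v) (hy : y ∈ dualCone v) :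
    x + y ∈ dualCone v :=
  fun w hw => by rw [pair_eq_dotProduct, add_dotProduct]; exact add_nonneg (hx w hw) (hy w hw)

lemma smul_mem_dualCone {c : ℝ} (hc : 0 ≤ c) {x : Fin d → ℝ} (hx : x ∈ dualCone v) :
    c • x ∈ dualCone v :=
  fun w hw => by rw [pair_eq_dotProduct, smul_dotProduct]; exact mul_nonneg hc (hx w hw)

lemma neg_mem_dualCone_of_forall_pair_eq_zero {u : Fin d → ℝ}
    (hu : ∀ j, pair u (toR (v j)) = 0) : -u ∈ dualCone v := by
  rintro _ ⟨c, -, rfl⟩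
  simp only [pair_eq_dotProduct] at hu ⊢
  simp [dotProduct_sum, dotProduct_smul, hu]

end DualCone

section PairSum

variable {v : Fin n → Fin d → ℤ}

def pairSum (v : Fin n → Fin d → ℤ) (x : Fin d → ℝ) : ℝ := ∑ j, pair x (toR (v j))

lemma isLinearMap_pairSum : IsLinearMap ℝ (pairSum v) where
  map_add x y := by simp [pairSum, pair_eq_dotProduct, add_dotProduct, Finset.sum_add_distrib]
  map_smul c x := by simp [pairSum, pair_eq_dotProduct, smul_dotProduct, Finset.mul_sum]

lemma pairSum_nonneg {x : Fin d → ℝ} (hx : x ∈ dualCone v) : 0 ≤ pairSum v x :=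
  Finset.sum_nonneg fun j _ => hx _ (toR_mem_cone j)

lemma pairSum_le_card {ω : Fin d → ℝ} (hω : ω ∈ dualCone v \ OSet v) : pairSum v ω ≤ n := by
  have hle : ∀ j, pair ω (toR (v j)) ≤ 1 := fun j =>
    le_of_not_ge fun h => hω.2 ⟨hω.1, j, h⟩
  simpa [pairSum] using Finset.sum_le_sum fun j (_ : j ∈ Finset.univ) => hle j

end PairSum

lemma Finset.exists_pos_forall_le {α : Type*} {s : Finset α} {f : α → ℝ}
    (hf : ∀ a ∈ s, 0 < f a) : ∃ m > 0, ∀ a ∈ s, m ≤ f a := by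
  rcases s.eq_empty_or_nonempty with rfl | hs
  · exact ⟨1, one_pos, by simp⟩
  · exact ⟨s.inf' hs f, (Finset.lt_inf'_iff hs).2 hf, fun a ha => Finset.inf'_le f ha⟩

section Newton

variable {v : Fin n → Fin d → ℤ} {A : Finset (Fin d → ℤ)}

lemma add_mem_newton {w y : Fin d → ℝ} (hw : w ∈ newton v A) (hy : y ∈ dualCone v) :
    w + y ∈ newton v A := by
  obtain ⟨c, hc, s, hs, rfl⟩ := hw
  exact ⟨c, hc, s + y, add_mem_dualCone hs hy, (add_assoc c s y).symm⟩

lemma zero_mem_newton_of_pairSum_eq_zero {a : Fin d → ℤ} (ha : a ∈ A)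
    (haσ : toR a ∈ dualCone v) (h : pairSum v (toR a) = 0) : (0 : Fin d → ℝ) ∈ newton v A := by
  have hpair : ∀ j, pair (toR a) (toR (v j)) = 0 := fun j =>
    (Finset.sum_eq_zero_iff_of_nonneg fun j _ => haσ _ (toR_mem_cone j)).1 h j
      (Finset.mem_univ j)
  exact ⟨toR a, subset_convexHull ℝ _ ⟨a, ha, rfl⟩, -toR a,
    neg_mem_dualCone_of_forall_pair_eq_zero hpair, add_neg_cancel _⟩

lemma zero_mem_newton_or_exists_pos_le_pairSum (hA : ∀ a ∈ A, toR a ∈ dualCone v) :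
    (0 : Fin d → ℝ) ∈ newton v A ∨ ∃ m > 0, ∀ w ∈ newton v A, m ≤ pairSum v w := by
  by_cases h0 : ∃ a ∈ A, pairSum v (toR a) = 0
  · obtain ⟨a, ha, h⟩ := h0
    exact Or.inl (zero_mem_newton_of_pairSum_eq_zero ha (hA a ha) h)
  push Not at h0
  obtain ⟨m, hm, hmA⟩ := Finset.exists_pos_forall_le (f := fun a => pairSum v (toR a))
    fun a ha => (pairSum_nonneg (hA a ha)).lt_of_ne' (h0 a ha)
  refine Or.inr ⟨m, hm, ?_⟩
  rintro _ ⟨c, hc, s, hs, rfl⟩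
  have hmc : m ≤ pairSum v c :=
    convexHull_min (by rintro _ ⟨a, ha, rfl⟩; exact hmA a ha)
      (convex_halfSpace_ge isLinearMap_pairSum m) hc
  rw [isLinearMap_pairSum.map_add]
  linarith [pairSum_nonneg hs]

end Newton

section Lam

variable {v : Fin n → Fin d → ℤ} {A : Finset (Fin d → ℤ)}

lemma lam_nonneg (x : Fin d → ℝ) : 0 ≤ lam v A x :=
  Real.sSup_nonneg fun _ hl => hl.1.le

lemma lam_eq_zero_of_zero_mem_newton (h0 : (0 : Fin d → ℝ) ∈ newton v A) {x : Fin d → ℝ}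
    (hx : x ∈ dualCone v) : lam v A x = 0 := by
  have hall : {l : ℝ | 0 < l ∧ x ∈ l • newton v A} = Set.Ioi 0 := by
    ext l
    refine ⟨And.left, fun hl => ⟨hl, l⁻¹ • x, ?_, smul_inv_smul₀ (ne_of_gt hl) x⟩⟩
    simpa using add_mem_newton h0 (smul_mem_dualCone (inv_nonneg.2 (le_of_lt hl)) hx)
  rw [lam, hall, Real.sSup_of_not_bddAbove (not_bddAbove_Ioi 0)]

variable {m : ℝ}

lemma le_pairSum_div_of_mem_smul_newton (hm : 0 < m) (hmP : ∀ w ∈ newton v A, m ≤ pairSum v w)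
    {x : Fin d → ℝ} {l : ℝ} (hl : 0 < l) (hx : x ∈ l • newton v A) : l ≤ pairSum v x / m := by
  obtain ⟨w, hw, rfl⟩ := hx
  rw [le_div_iff₀ hm, isLinearMap_pairSum.map_smul, smul_eq_mul]
  exact mul_le_mul_of_nonneg_left (hmP w hw) hl.le

lemma lam_le_pairSum_div (hm : 0 < m) (hmP : ∀ w ∈ newton v A, m ≤ pairSum v w)
    {x : Fin d → ℝ} (hx : 0 ≤ pairSum v x) : lam v A x ≤ pairSum v x / m :=
  Real.sSup_le (fun _ hl => le_pairSum_div_of_mem_smul_newton hm hmP hl.1 hl.2)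
    (div_nonneg hx hm.le)

lemma lam_le_lam_add (hm : 0 < m) (hmP : ∀ w ∈ newton v A, m ≤ pairSum v w)
    {x y : Fin d → ℝ} (hy : y ∈ dualCone v) : lam v A x ≤ lam v A (x + y) := by
  have hbdd : BddAbove {l : ℝ | 0 < l ∧ x + y ∈ l • newton v A} :=
    ⟨pairSum v (x + y) / m, fun _ hl => le_pairSum_div_of_mem_smul_newton hm hmP hl.1 hl.2⟩
  refine Real.sSup_le (fun l ⟨hl, hxl⟩ => le_csSup hbdd ⟨hl, ?_⟩) (lam_nonneg _)
  obtain ⟨w, hw, rfl⟩ := hxl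
  refine ⟨w + l⁻¹ • y, add_mem_newton hw (smul_mem_dualCone (by positivity) hy), ?_⟩
  simp [smul_add, smul_inv_smul₀ hl.ne']

end Lam

section MuA

variable {v : Fin n → Fin d → ℤ} {A : Finset (Fin d → ℤ)}

lemma muA_nonneg (u : Fin d → ℤ) : 0 ≤ muA v A u :=
  Real.sSup_nonneg (by rintro _ ⟨x, -, rfl⟩; exact lam_nonneg x)

lemma muA_eq_zero_of_zero_mem_newton (h0 : (0 : Fin d → ℝ) ∈ newton v A) {u : Fin d → ℤ}
    (hu : toR u ∈ dualCone v) : muA v A u = 0 := by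
  refine le_antisymm (Real.sSup_le ?_ le_rfl) (muA_nonneg u)
  rintro _ ⟨_, ⟨ω, hω, rfl⟩, rfl⟩
  exact (lam_eq_zero_of_zero_mem_newton h0 (add_mem_dualCone hu hω.1)).le

lemma bddAbove_lam_image {m : ℝ} (hm : 0 < m) (hmP : ∀ w ∈ newton v A, m ≤ pairSum v w)
    {u : Fin d → ℤ} (hu : toR u ∈ dualCone v) :
    BddAbove (lam v A '' (toR u +ᵥ (dualCone v \ OSet v))) := by
  refine ⟨(pairSum v (toR u) + n) / m, ?_⟩
  rintro _ ⟨_, ⟨ω, hω, rfl⟩, rfl⟩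
  have hsum : pairSum v (toR u +ᵥ ω) = pairSum v (toR u) + pairSum v ω :=
    isLinearMap_pairSum.map_add _ _
  calc lam v A (toR u +ᵥ ω) ≤ pairSum v (toR u +ᵥ ω) / m :=
        lam_le_pairSum_div hm hmP (pairSum_nonneg (add_mem_dualCone hu hω.1))
    _ ≤ (pairSum v (toR u) + n) / m := by
        rw [hsum]; gcongr; exact pairSum_le_card hω

lemma muA_le_muA_add (hA : ∀ a ∈ A, toR a ∈ dualCone v) {u z : Fin d → ℤ}
    (hu : toR u ∈ dualCone v) (hz : toR z ∈ dualCone v) : muA v A u ≤ muA v A (u + z) := by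
  rcases zero_mem_newton_or_exists_pos_le_pairSum hA with h0 | ⟨m, hm, hmP⟩
  · rw [muA_eq_zero_of_zero_mem_newton h0 hu]
    exact muA_nonneg _
  have huz : toR (u + z) ∈ dualCone v := by rw [toR_add]; exact add_mem_dualCone hu hz
  refine Real.sSup_le ?_ (muA_nonneg _)
  rintro _ ⟨_, ⟨ω, hω, rfl⟩, rfl⟩
  calc lam v A (toR u +ᵥ ω) ≤ lam v A ((toR u +ᵥ ω) + toR z) := lam_le_lam_add hm hmP hz
    _ = lam v A (toR (u + z) +ᵥ ω) := by rw [toR_add, vadd_eq_add, vadd_eq_add, add_right_comm]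
    _ ≤ muA v A (u + z) := le_csSup (bddAbove_lam_image hm hmP huz) ⟨_, ⟨ω, hω, rfl⟩, rfl⟩

end MuA

lemma sInf_image_eq_inf' {α : Type*} {f : α → ℝ} {B : Finset α} (hB : B.Nonempty) {S : Set α}
    (hBS : ↑B ⊆ S) (hSB : ∀ s ∈ S, ∃ b ∈ B, f b ≤ f s) : sInf (f '' S) = B.inf' hB f := by
  obtain ⟨b₀, hb₀, hb₀min⟩ := B.exists_mem_eq_inf' hB f
  refine IsLeast.csInf_eq ⟨Set.mem_image_of_mem f (hBS hb₀), ?_⟩ |>.trans hb₀min.symm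
  rintro _ ⟨s, hs, rfl⟩
  obtain ⟨b, hb, hbs⟩ := hSB s hs
  exact (hb₀min ▸ B.inf'_le f hb).trans hbs

theorem inf_muA_eq_min_general
    (d n : ℕ)
    (v : Fin n → Fin d → ℤ)
    (A : Finset (Fin d → ℤ))
    (hAl : ∀ a ∈ A, toR a ∈ dualCone v)
    (B : Finset (Fin d → ℤ)) (hBne : B.Nonempty)
    (hBl : ∀ b ∈ B, toR b ∈ dualCone v) :
    sInf (muA v A '' ((↑B : Set (Fin d → ℤ)) + {z : Fin d → ℤ | toR z ∈ dualCone v})) =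
      B.inf' hBne (muA v A) := by
  refine sInf_image_eq_inf' hBne (fun b hb => ⟨b, hb, 0, ?_, add_zero b⟩) ?_
  · simpa [toR_zero] using zero_mem_dualCone
  · rintro _ ⟨b, hb, z, hz, rfl⟩
    exact ⟨b, hb, muA_le_muA_add hAl (hBl b hb) hz⟩

/-- the infimum of `μ_A` over all exponents of monomials of the
monomial ideal generated by `B` equals the minimum of `μ_A` over the
generators `b ∈ B`. -/
theorem inf_muA_eq_min
    (d n : ℕ) (hd : 1 ≤ d)
    (v : Fin n → Fin d → ℤ)
    (hsc : StronglyConvex v) (hprim : ∀ j, IsPrimitive (v j))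
    (hdim : FullDim v)
    (A : Finset (Fin d → ℤ)) (hAne : A.Nonempty)
    (hAl : ∀ a ∈ A, toR a ∈ dualCone v)
    (B : Finset (Fin d → ℤ)) (hBne : B.Nonempty)
    (hBl : ∀ b ∈ B, toR b ∈ dualCone v) :
    sInf (muA v A '' ((↑B : Set (Fin d → ℤ)) + {z : Fin d → ℤ | toR z ∈ dualCone v})) =
      B.inf' hBne (muA v A) :=
  inf_muA_eq_min_general d n v A hAl B hBne hBl

end Paper
end
end
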